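/- A Polish group G is Roelcke precompact (as a group) if and only if G is coarsely bounded (as a group) and locally Roelcke precompact. -/

import Mathlib

open scoped Pointwise

/-- A subset `A` of a topological group `G` is *Roelcke precompact* if for every
neighborhood `V` of the identity there is a finite set `F ⊆ G` with `A ⊆ V * F * V`,
where `V * F * V = {v * f * w : v, w ∈ V, f ∈ F}`. -/
def RoelckePrecompact {G : Type*} [Group G] [TopologicalSpace G] (A : Set G) : Prop :=
  ∀ V ∈ nhds (1 : G), ∃ F : Finset G, A ⊆ V * (F : Set G) * V

/-- A topological group is *locally Roelcke precompact* if some open neighborhood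
of the identity is Roelcke precompact. -/
def LocallyRoelckePrecompact (G : Type*) [Group G] [TopologicalSpace G] : Prop :=
  ∃ U : Set G, IsOpen U ∧ (1 : G) ∈ U ∧ RoelckePrecompact U

/-- A subset `A` of a topological group is *coarsely bounded* if every continuous
left-invariant pseudometric on `G` assigns finite diameter to `A`. -/
def IsCoarselyBounded {G : Type*} [Group G] [TopologicalSpace G] (A : Set G) : Prop :=
  ∀ d : G → G → ℝ,
    Continuous (fun p : G × G => d p.1 p.2) →
    (∀ x, d x x = 0) → (∀ x y, d x y = d y x) → (∀ x y z, d x z ≤ d x y + d y z) →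
    (∀ g x y, d (g * x) (g * y) = d x y) →
    ∃ C : ℝ, ∀ x ∈ A, ∀ y ∈ A, d x y ≤ C

/-!
A Roelcke precompact set `A ⊆ V F V` is coarsely bounded: if `V` is the unit ball of a continuous
left-invariant pseudometric `d` around `1`, then `d 1 a ≤ 2 + max_{f ∈ F} d 1 f` on `A`.

Conversely, in a locally Roelcke precompact group a product of Roelcke precompact sets is again
Roelcke precompact, so a dense sequence yields an exhausting chain `W₀ ⊆ W₁ ⊆ ⋯` of symmetric
Roelcke precompact identity neighbourhoods with `Wₙ Wₙ ⊆ Wₙ₊₁`. Continued downwards by small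
identity neighbourhoods, this chain feeds the Birkhoff–Kakutani construction of a continuous
left-invariant pseudometric each of whose balls around `1` lies in a member of the chain. Coarse
boundedness of `G` bounds this pseudometric, hence `G = Wₙ` for some `n`.
-/

open Filter Topology Set
open scoped NNReal

theorem eventually_conj_mem_nhds_one {G : Type*} [Group G] [TopologicalSpace G] [ContinuousMul G]
    {V : Set G} (hV : V ∈ 𝓝 (1 : G)) (g : G) : ∀ᶠ w in 𝓝 (1 : G), g * w * g⁻¹ ∈ V :=
  ((continuous_mul_const g⁻¹).comp (continuous_const_mul g)).tendsto' 1 1 (by simp) hV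

namespace RoelckePrecompact

variable {G : Type*} [Group G] [TopologicalSpace G] {A B U : Set G}

theorem mono (hB : RoelckePrecompact B) (hAB : A ⊆ B) : RoelckePrecompact A :=
  fun V hV => (hB V hV).imp fun _ hF => hAB.trans hF

theorem union (hA : RoelckePrecompact A) (hB : RoelckePrecompact B) :
    RoelckePrecompact (A ∪ B) := by
  classical
  intro V hV
  obtain ⟨F₁, hF₁⟩ := hA V hV
  obtain ⟨F₂, hF₂⟩ := hB V hV
  refine ⟨F₁ ∪ F₂, union_subset (hF₁.trans ?_) (hF₂.trans ?_)⟩ <;> gcongr <;> simp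

theorem _root_.Set.Finite.roelckePrecompact (hA : A.Finite) : RoelckePrecompact A :=
  fun _ hV => ⟨hA.toFinset, fun a ha =>
    ⟨a, ⟨1, mem_of_mem_nhds hV, a, by simpa using ha, one_mul a⟩, 1, mem_of_mem_nhds hV, mul_one a⟩⟩

theorem isCoarselyBounded (hA : RoelckePrecompact A) : IsCoarselyBounded A := by
  intro d hd hself hsymm htri hinv
  have hV : {g : G | d 1 g < 1} ∈ 𝓝 (1 : G) :=
    (isOpen_lt (hd.comp (continuous_const.prodMk continuous_id)) continuous_const).mem_nhds
      (by simp [hself])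
  obtain ⟨F, hF⟩ := hA _ hV
  obtain ⟨C, hC⟩ := (F.finite_toSet.image (d 1)).bddAbove
  have hbound : ∀ a ∈ A, d 1 a ≤ C + 2 := by
    intro a ha
    obtain ⟨_, ⟨v, hv, f, hf, rfl⟩, w, hw, rfl⟩ := hF ha
    have hv : d 1 v < 1 := hv
    have hw : d 1 w < 1 := hw
    have hvf : d v (v * f) = d 1 f := by simpa using hinv v 1 f
    have hfw : d (v * f) (v * f * w) = d 1 w := by simpa using hinv (v * f) 1 w
    linarith [htri 1 v (v * f * w), htri v (v * f) (v * f * w), hC (mem_image_of_mem _ hf)]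
  exact ⟨2 * C + 4, fun x hx y hy => by
    linarith [htri x 1 y, hsymm x 1, hbound x hx, hbound y hy]⟩

variable [ContinuousMul G]

/-- Writing `a = v₁ f v₂`, `b = v₃ f' v₄` and `v₂ v₃ = w₁ f₁ w₂ ∈ U`, the conjugates `f w₁ f⁻¹` and
`f'⁻¹ w₂ f'` can be absorbed into the outer factors, giving `a b ∈ V (f f₁ f') V`. -/
theorem mul (hU : U ∈ 𝓝 1) (hUrp : RoelckePrecompact U) (hA : RoelckePrecompact A)
    (hB : RoelckePrecompact B) : RoelckePrecompact (A * B) := by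
  classical
  intro V hV
  obtain ⟨V₀, hV₀, hV₀V⟩ := exists_nhds_one_split (inter_mem hV hU)
  obtain ⟨FA, hFA⟩ := hA V₀ hV₀
  obtain ⟨FB, hFB⟩ := hB V₀ hV₀
  obtain ⟨FU, hFU⟩ := hUrp {w | w ∈ V₀ ∧ (∀ f ∈ FA, f * w * f⁻¹ ∈ V₀) ∧ ∀ f ∈ FB, f⁻¹ * w * f ∈ V₀}
    (by
      filter_upwards [hV₀,
        (eventually_all_finset FA).2 fun f _ => eventually_conj_mem_nhds_one hV₀ f,
        (eventually_all_finset FB).2 fun f _ => by simpa using eventually_conj_mem_nhds_one hV₀ f⁻¹]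
        with w h₁ h₂ h₃ using ⟨h₁, h₂, h₃⟩)
  refine ⟨FA * FU * FB, ?_⟩
  rintro _ ⟨a, ha, b, hb, rfl⟩
  obtain ⟨_, ⟨v₁, hv₁, f, hf, rfl⟩, v₂, hv₂, rfl⟩ := hFA ha
  obtain ⟨_, ⟨v₃, hv₃, f', hf', rfl⟩, v₄, hv₄, rfl⟩ := hFB hb
  obtain ⟨_, ⟨w₁, hw₁, f₁, hf₁, rfl⟩, w₂, hw₂, hw⟩ := hFU (hV₀V v₂ hv₂ v₃ hv₃).2
  refine ⟨v₁ * (f * w₁ * f⁻¹) * (f * f₁ * f'), mul_mem_mul (hV₀V _ hv₁ _ (hw₁.2.1 f hf)).1 ?_,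
    f'⁻¹ * w₂ * f' * v₄, (hV₀V _ (hw₂.2.2 f' hf') _ hv₄).1, ?_⟩
  · rw [Finset.coe_mul, Finset.coe_mul]
    exact mul_mem_mul (mul_mem_mul hf hf₁) hf'
  · calc v₁ * (f * w₁ * f⁻¹) * (f * f₁ * f') * (f'⁻¹ * w₂ * f' * v₄)
        = v₁ * f * (w₁ * f₁ * w₂) * f' * v₄ := by group
      _ = v₁ * f * v₂ * (v₃ * f' * v₄) := by rw [show w₁ * f₁ * w₂ = v₂ * v₃ from hw]; group

theorem pow (hU : U ∈ 𝓝 1) (hUrp : RoelckePrecompact U) (hA : RoelckePrecompact A) :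
    ∀ n : ℕ, RoelckePrecompact (A ^ n)
  | 0 => finite_one.roelckePrecompact
  | n + 1 => by rw [pow_succ]; exact mul hU hUrp (pow hU hUrp hA n) hA

end RoelckePrecompact

section Chain

variable {G : Type*} [Group G] [TopologicalSpace G]

structure IsSymmNhdsChain {ι : Type*} [Add ι] [One ι] (E : ι → Set G) : Prop where
  mem_nhds : ∀ i, E i ∈ 𝓝 (1 : G)
  inv_eq : ∀ i, (E i)⁻¹ = E i
  mul_subset : ∀ i, E i * E i ⊆ E (i + 1)

namespace IsSymmNhdsChain

theorem subset_succ {ι : Type*} [Add ι] [One ι] {E : ι → Set G} (hE : IsSymmNhdsChain E)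
    (i : ι) : E i ⊆ E (i + 1) :=
  fun g hg => hE.mul_subset i ⟨g, hg, 1, mem_of_mem_nhds (hE.mem_nhds i), mul_one g⟩

theorem monotone {E : ℤ → Set G} (hE : IsSymmNhdsChain E) : Monotone E :=
  monotone_int_of_le_succ hE.subset_succ

end IsSymmNhdsChain

theorem isSymmNhdsChain_pow_two_pow {S : ℕ → Set G} (hS : Monotone S)
    (hnhds : ∀ n, S n ∈ 𝓝 (1 : G)) (hinv : ∀ n, (S n)⁻¹ = S n) :
    IsSymmNhdsChain fun n => S n ^ 2 ^ n where
  mem_nhds n := mem_of_superset (hnhds n)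
    (subset_pow (mem_of_mem_nhds (hnhds n)) (pow_ne_zero n two_ne_zero))
  inv_eq n := by rw [← inv_pow, hinv]
  mul_subset n := by
    rw [← pow_add, ← two_mul, ← pow_succ']
    exact pow_subset_pow_left (hS n.le_succ)

variable [IsTopologicalGroup G]

theorem exists_seq_symm_nhds_mul_subset {s : Set G} (hs : s ∈ 𝓝 1) (hinv : s⁻¹ = s) :
    ∃ V : ℕ → Set G, V 0 = s ∧
      ∀ n, V n ∈ 𝓝 1 ∧ (V n)⁻¹ = V n ∧ V (n + 1) * V (n + 1) ⊆ V n := by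
  have step (t : {t : Set G // t ∈ 𝓝 1 ∧ t⁻¹ = t}) :
      ∃ t' : {t : Set G // t ∈ 𝓝 1 ∧ t⁻¹ = t}, t'.1 * t'.1 ⊆ t.1 := by
    obtain ⟨v, hv, -, hvinv, hvt⟩ := exists_closed_nhds_one_inv_eq_mul_subset t.2.1
    exact ⟨⟨v, hv, hvinv⟩, hvt⟩
  choose next hnext using step
  refine ⟨fun n => (next^[n] ⟨s, hs, hinv⟩).1, rfl,
    fun n => ⟨(next^[n] _).2.1, (next^[n] _).2.2, ?_⟩⟩
  simpa only [Function.iterate_succ_apply'] using hnext _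

theorem IsSymmNhdsChain.exists_int_extension {W : ℕ → Set G} (hW : IsSymmNhdsChain W) :
    ∃ E : ℤ → Set G, IsSymmNhdsChain E ∧ ∀ n : ℕ, E n = W n := by
  obtain ⟨V, hV0, hV⟩ := exists_seq_symm_nhds_mul_subset (hW.mem_nhds 0) (hW.inv_eq 0)
  let E : ℤ → Set G
    | .ofNat n => W n
    | .negSucc n => V (n + 1)
  refine ⟨E, ⟨?_, ?_, ?_⟩, fun n => rfl⟩
  · rintro (n | n)
    exacts [hW.mem_nhds n, (hV _).1]
  · rintro (n | n)
    exacts [hW.inv_eq n, (hV _).2.1]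
  · rintro (n | _ | n)
    · exact hW.mul_subset n
    · show V 1 * V 1 ⊆ W 0
      exact hV0 ▸ (hV 0).2.2
    · exact (hV _).2.2

end Chain

section ChainLength

variable {G : Type*} {D : ℤ → Set G}

variable (D) in
/-- An element lying in no `D k` gets the junk length `0` (an empty `⨅` in `ℝ≥0`). -/
noncomputable def chainLength (g : G) : ℝ≥0 :=
  ⨅ k : {k : ℤ // g ∈ D k}, 2 ^ (k : ℤ)

theorem chainLength_le {g : G} {k : ℤ} (h : g ∈ D k) : chainLength D g ≤ 2 ^ k :=
  ciInf_le (OrderBot.bddBelow _) (⟨k, h⟩ : {k // g ∈ D k})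

theorem exists_mem_of_chainLength_lt {g : G} {r : ℝ≥0} (hg : ∃ k, g ∈ D k)
    (h : chainLength D g < r) : ∃ k, g ∈ D k ∧ 2 ^ k < r := by
  obtain ⟨k, hk⟩ := hg
  have : Nonempty {k // g ∈ D k} := ⟨⟨k, hk⟩⟩
  obtain ⟨⟨j, hj⟩, hjr⟩ := exists_lt_of_ciInf_lt h
  exact ⟨j, hj, hjr⟩

theorem chainLength_one [One G] (h1 : ∀ k, (1 : G) ∈ D k) : chainLength D 1 = 0 :=
  nonpos_iff_eq_zero.1 <| le_of_forall_gt_imp_ge_of_dense fun ε hε => by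
    obtain ⟨k, hk, -⟩ := NNReal.exists_mem_Ioc_zpow hε.ne' one_lt_two
    exact (chainLength_le (h1 k)).trans hk.le

theorem chainLength_inv [Inv G] (hinv : ∀ k, (D k)⁻¹ = D k) (g : G) :
    chainLength D g⁻¹ = chainLength D g := by
  have : (fun k => g⁻¹ ∈ D k) = fun k => g ∈ D k := funext fun k => by rw [← Set.mem_inv, hinv]
  unfold chainLength
  rw [this]

theorem chainLength_mul_mul_le [Mul G] (hmono : Monotone D)
    (hmul : ∀ k, D k * D k * D k ⊆ D (k + 1)) (hexh : ∀ g, ∃ k, g ∈ D k) (a b c : G) :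
    chainLength D (a * b * c) ≤
      2 * max (chainLength D a) (max (chainLength D b) (chainLength D c)) := by
  refine le_of_forall_gt_imp_ge_of_dense fun t ht => ?_
  have ht2 : max (chainLength D a) (max (chainLength D b) (chainLength D c)) < t / 2 := by
    rwa [lt_div_iff₀ two_pos, mul_comm]
  simp only [max_lt_iff] at ht2
  obtain ⟨i, hi, hit⟩ := exists_mem_of_chainLength_lt (hexh a) ht2.1
  obtain ⟨j, hj, hjt⟩ := exists_mem_of_chainLength_lt (hexh b) ht2.2.1
  obtain ⟨k, hk, hkt⟩ := exists_mem_of_chainLength_lt (hexh c) ht2.2.2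
  set m := max i (max j k)
  have hm : (2 : ℝ≥0) ^ m < t / 2 := by
    rw [(zpow_right_strictMono₀ one_lt_two).monotone.map_max,
      (zpow_right_strictMono₀ one_lt_two).monotone.map_max]
    exact max_lt hit (max_lt hjt hkt)
  have habc : a * b * c ∈ D (m + 1) := by
    refine hmul m (mul_mem_mul (mul_mem_mul (hmono ?_ hi) (hmono ?_ hj)) (hmono ?_ hk)) <;>
      simp [m]
  calc chainLength D (a * b * c) ≤ 2 ^ (m + 1) := chainLength_le habc
    _ = 2 * 2 ^ m := by rw [zpow_add_one₀ two_ne_zero, mul_comm]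
    _ ≤ 2 * (t / 2) := by gcongr
    _ = t := mul_div_cancel₀ t two_ne_zero

theorem tendsto_chainLength_nhds_one [One G] [TopologicalSpace G] (hD : ∀ k, D k ∈ 𝓝 (1 : G)) :
    Tendsto (chainLength D) (𝓝 1) (𝓝 0) := by
  refine tendsto_order.2 ⟨fun r hr => absurd hr zero_le.not_gt, fun ε hε => ?_⟩
  obtain ⟨k, hk, -⟩ := NNReal.exists_mem_Ioc_zpow hε.ne' one_lt_two
  filter_upwards [hD k] with g hg using (chainLength_le hg).trans_lt hk

end ChainLength

theorem PseudoMetricSpace.dist_ofPreNNDist_comp_le {X Y : Type*} {d : X → X → ℝ≥0}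
    (hd₀ : ∀ x, d x x = 0) (hd : ∀ x y, d x y = d y x) {d' : Y → Y → ℝ≥0}
    (hd₀' : ∀ y, d' y y = 0) (hd' : ∀ x y, d' x y = d' y x) {f : X → Y}
    (hf : ∀ x y, d' (f x) (f y) ≤ d x y) (x y : X) :
    @dist Y (ofPreNNDist d' hd₀' hd').toDist (f x) (f y) ≤
      @dist X (ofPreNNDist d hd₀ hd).toDist x y := by
  rw [dist_ofPreNNDist, dist_ofPreNNDist, NNReal.coe_le_coe]
  refine le_ciInf fun l => (ciInf_le (OrderBot.bddBelow _) (l.map f)).trans ?_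
  rw [← List.map_cons, show l.map f ++ [f y] = (l ++ [y]).map f by simp, List.zipWith_map,
    ← List.map_uncurry_zip_eq_zipWith, ← List.map_uncurry_zip_eq_zipWith]
  exact List.sum_le_sum fun p _ => hf p.1 p.2

theorem continuous_of_mul_left_invariant {G : Type*} [Group G] [TopologicalSpace G]
    [ContinuousMul G] {d : G → G → ℝ} (hsymm : ∀ x y, d x y = d y x)
    (htri : ∀ x y z, d x z ≤ d x y + d y z) (hinv : ∀ g x y, d (g * x) (g * y) = d x y)
    (h1 : Tendsto (d 1) (𝓝 1) (𝓝 0)) : Continuous fun p : G × G => d p.1 p.2 := by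
  have hx (x : G) : Tendsto (d x) (𝓝 x) (𝓝 0) := by
    have hd : d x = d 1 ∘ (x⁻¹ * ·) :=
      funext fun y => by rw [Function.comp_apply, ← inv_mul_cancel x, hinv]
    rw [hd]
    exact h1.comp (by simpa using (continuous_const_mul x⁻¹).tendsto x)
  refine continuous_iff_continuousAt.2 fun p => tendsto_iff_dist_tendsto_zero.2 ?_
  have hp : Tendsto (fun q : G × G => d p.1 q.1 + d p.2 q.2) (𝓝 p) (𝓝 0) := by
    simpa using ((hx p.1).comp (continuous_fst.tendsto p)).add
      ((hx p.2).comp (continuous_snd.tendsto p))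
  refine squeeze_zero (fun _ => dist_nonneg) (fun q => ?_) hp
  rw [Real.dist_eq, abs_sub_le_iff]
  constructor <;>
    linarith [htri q.1 p.1 q.2, htri p.1 p.2 q.2, htri p.1 q.1 p.2, htri q.1 q.2 p.2,
      hsymm p.1 q.1, hsymm p.2 q.2]

section CoarselyBounded

variable {G : Type*} [Group G] [TopologicalSpace G] [ContinuousMul G] {D : ℤ → Set G}

/-- Birkhoff–Kakutani: the largest pseudometric below `(x, y) ↦ chainLength D (x⁻¹ * y)`. -/
theorem exists_pseudometric_chainLength_le (hD : ∀ k, D k ∈ 𝓝 (1 : G))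
    (hinv : ∀ k, (D k)⁻¹ = D k) (hmul : ∀ k, D k * D k * D k ⊆ D (k + 1))
    (hexh : ∀ g, ∃ k, g ∈ D k) :
    ∃ d : G → G → ℝ, Continuous (fun p : G × G => d p.1 p.2) ∧ (∀ x, d x x = 0) ∧
      (∀ x y, d x y = d y x) ∧ (∀ x y z, d x z ≤ d x y + d y z) ∧
      (∀ g x y, d (g * x) (g * y) = d x y) ∧ ∀ x y, (chainLength D (x⁻¹ * y) : ℝ) ≤ 2 * d x y := by
  have h1 (k : ℤ) : (1 : G) ∈ D k := mem_of_mem_nhds (hD k)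
  have hmono : Monotone D := monotone_int_of_le_succ fun k g hg => by
    simpa using hmul k (mul_mem_mul (mul_mem_mul (h1 k) (h1 k)) hg)
  set ρ : G → G → ℝ≥0 := fun x y => chainLength D (x⁻¹ * y)
  have hρ_self (x : G) : ρ x x = 0 := by simp [ρ, chainLength_one h1]
  have hρ_comm (x y : G) : ρ x y = ρ y x := by
    simp only [ρ]
    rw [← chainLength_inv hinv, mul_inv_rev, inv_inv]
  have hρ_mul (g x y : G) : ρ (g * x) (g * y) = ρ x y := by simp [ρ, mul_assoc]
  let I := PseudoMetricSpace.ofPreNNDist ρ hρ_self hρ_comm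
  have hI_le (g x y : G) : I.dist (g * x) (g * y) ≤ I.dist x y :=
    PseudoMetricSpace.dist_ofPreNNDist_comp_le _ _ _ _ (fun x y => (hρ_mul g x y).le) x y
  have hI_mul (g x y : G) : I.dist (g * x) (g * y) = I.dist x y :=
    le_antisymm (hI_le g x y) (by simpa using hI_le g⁻¹ (g * x) (g * y))
  have hI_one : Tendsto (I.dist 1) (𝓝 1) (𝓝 0) :=
    squeeze_zero (fun _ => dist_nonneg) (PseudoMetricSpace.dist_ofPreNNDist_le ρ _ _ 1)
      (by simpa [ρ] using NNReal.tendsto_coe.2 (tendsto_chainLength_nhds_one hD))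
  refine ⟨I.dist, continuous_of_mul_left_invariant I.dist_comm I.dist_triangle hI_mul hI_one,
    I.dist_self, I.dist_comm, I.dist_triangle, hI_mul, fun x y => ?_⟩
  refine PseudoMetricSpace.le_two_mul_dist_ofPreNNDist ρ _ _ (fun a b c e => ?_) x y
  simpa [ρ, mul_assoc] using chainLength_mul_mul_le hmono hmul hexh (a⁻¹ * b) (b⁻¹ * c) (c⁻¹ * e)

theorem IsCoarselyBounded.exists_forall_inv_mul_mem {A : Set G} (hA : IsCoarselyBounded A)
    {E : ℤ → Set G} (hE : IsSymmNhdsChain E) (hexh : ∀ g, ∃ k, g ∈ E k) :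
    ∃ k, ∀ x ∈ A, ∀ y ∈ A, x⁻¹ * y ∈ E k := by
  have hmul (k : ℤ) : E (2 * k) * E (2 * k) * E (2 * k) ⊆ E (2 * (k + 1)) := calc
    _ ⊆ E (2 * k + 1) * E (2 * k + 1) := by
      gcongr
      exacts [hE.mul_subset _, hE.subset_succ _]
    _ ⊆ E (2 * (k + 1)) := by rw [show 2 * (k + 1) = 2 * k + 1 + 1 by ring]; exact hE.mul_subset _
  have hexh' (g : G) : ∃ k, g ∈ E (2 * k) := by
    obtain ⟨k, hk⟩ := hexh g
    exact ⟨|k|, hE.monotone (by linarith [le_abs_self k, abs_nonneg k]) hk⟩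
  obtain ⟨d, hd, hself, hsymm, htri, hdmul, hlen⟩ := exists_pseudometric_chainLength_le
    (fun k => hE.mem_nhds (2 * k)) (fun k => hE.inv_eq (2 * k)) hmul hexh'
  obtain ⟨C, hC⟩ := hA d hd hself hsymm htri hdmul
  obtain ⟨n, hn⟩ := pow_unbounded_of_one_lt (2 * C) (one_lt_two (α := ℝ))
  refine ⟨2 * n, fun x hx y hy => ?_⟩
  have hlt : chainLength (fun k => E (2 * k)) (x⁻¹ * y) < 2 ^ (n : ℤ) := by
    rw [← NNReal.coe_lt_coe, zpow_natCast]
    push_cast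
    linarith [hlen x y, hC x hx y hy]
  obtain ⟨j, hj, hjn⟩ := exists_mem_of_chainLength_lt (hexh' _) hlt
  exact hE.monotone (by linarith [(zpow_lt_zpow_iff_right₀ one_lt_two).1 hjn]) hj

end CoarselyBounded

theorem LocallyRoelckePrecompact.exists_isSymmNhdsChain {G : Type*} [Group G] [TopologicalSpace G]
    [IsTopologicalGroup G] [TopologicalSpace.SeparableSpace G] (h : LocallyRoelckePrecompact G) :
    ∃ W : ℕ → Set G, IsSymmNhdsChain W ∧ (∀ n, RoelckePrecompact (W n)) ∧ ∀ g, ∃ n, g ∈ W n := by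
  obtain ⟨U₀, hU₀, hU₀1, hU₀rp⟩ := h
  set U := U₀ ∩ U₀⁻¹
  have hUo : IsOpen U := hU₀.inter hU₀.inv
  have hU : U ∈ 𝓝 1 := hUo.mem_nhds ⟨hU₀1, by simpa using hU₀1⟩
  have hUrp : RoelckePrecompact U := hU₀rp.mono inter_subset_left
  obtain ⟨u, hu⟩ := TopologicalSpace.exists_dense_seq G
  set S : ℕ → Set G := fun n => U ∪ u '' Iic n ∪ (u '' Iic n)⁻¹
  have hSmono : Monotone S := fun m n hmn => by
    have := image_mono (f := u) (Iic_subset_Iic.2 hmn)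
    exact union_subset_union (union_subset_union_right _ this) (inv_subset_inv.2 this)
  have hSnhds (n : ℕ) : S n ∈ 𝓝 1 := mem_of_superset hU (subset_union_left.trans subset_union_left)
  have hSinv (n : ℕ) : (S n)⁻¹ = S n := by
    simp only [S, U, union_inv, inter_inv, inv_inv, inter_comm U₀⁻¹,
      union_right_comm _ _ (u '' Iic n)]
  have hSrp (n : ℕ) : RoelckePrecompact (S n) :=
    (hUrp.union ((finite_Iic n).image u).roelckePrecompact).union
      ((finite_Iic n).image u).inv.roelckePrecompact
  have hcover (g : G) : ∃ n, g ∈ S n * S n := by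
    obtain ⟨n, hn⟩ := hu.exists_mem_open (hUo.preimage (continuous_inv.mul continuous_const))
      (⟨g, by simpa using mem_of_mem_nhds hU⟩ : ({y | y⁻¹ * g ∈ U} : Set G).Nonempty)
    exact ⟨n, u n, Or.inl (Or.inr (mem_image_of_mem u self_mem_Iic)), _, Or.inl (Or.inl hn),
      mul_inv_cancel_left _ _⟩
  refine ⟨fun n => S n ^ 2 ^ n, isSymmNhdsChain_pow_two_pow hSmono hSnhds hSinv,
    fun n => RoelckePrecompact.pow hU hUrp (hSrp n) _, fun g => ?_⟩
  obtain ⟨n, hn⟩ := hcover g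
  refine ⟨n + 1, pow_subset_pow_right (m := 2) (mem_of_mem_nhds (hSnhds _))
    (Nat.le_self_pow n.succ_ne_zero 2) ?_⟩
  rw [sq]
  exact mul_subset_mul (hSmono n.le_succ) (hSmono n.le_succ) hn

/-- A Polish group is Roelcke precompact (as a group) if and only if it is coarsely
bounded (as a group) and locally Roelcke precompact. -/
theorem roelckePrecompact_iff_coarselyBounded_and_locallyRoelckePrecompact
    (G : Type*) [Group G] [TopologicalSpace G] [IsTopologicalGroup G] [PolishSpace G] :
    RoelckePrecompact (Set.univ : Set G) ↔
      (IsCoarselyBounded (Set.univ : Set G) ∧ LocallyRoelckePrecompact G) := by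
  refine ⟨fun h => ⟨h.isCoarselyBounded, univ, isOpen_univ, mem_univ 1, h⟩, ?_⟩
  rintro ⟨hCB, hloc⟩
  obtain ⟨W, hW, hWrp, hWexh⟩ := hloc.exists_isSymmNhdsChain
  obtain ⟨E, hE, hEW⟩ := hW.exists_int_extension
  have hEexh (g : G) : ∃ k : ℤ, g ∈ E k := by
    obtain ⟨n, hn⟩ := hWexh g
    exact ⟨n, by rwa [hEW]⟩
  obtain ⟨k, hk⟩ := hCB.exists_forall_inv_mul_mem hE hEexh
  refine (hWrp k.toNat).mono fun g _ => hEW k.toNat ▸ hE.monotone (Int.self_le_toNat k) ?_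
  simpa using hk 1 trivial g trivial
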